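/- arXiv:2005.08888 — 2 statements merged into one kernel-verified Lean document; each statement's English description precedes it below -/
import Mathlib

section
/- The formal power series F(t) = Σ_{n≥1} ca_n(a,b)·t^n, with coefficients in ℤ[a,b], satisfies the quadratic functional equation F = t + (a+b)·t·F + a·b·t·F², i.e., a·b·t·F² − (1 − (a+b)·t)·F + t = 0 in ℤ[a,b][[t]]. -/
open MvPolynomial

/-- Narayana number T(n,k) = (1/k)·C(n−1,k−1)·C(n,k−1). -/
def narayana (n k : ℕ) : ℕ := ((n - 1).choose (k - 1) * n.choose (k - 1)) / k

/-- The polynomial ca_n(a,b) = Σ_{i=0}^{n−1} T(n,i+1)·a^i·b^{n−1−i} ∈ ℤ[a,b],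
with a = X 0 and b = X 1.  (For n = 0 this is the empty sum 0.) -/
noncomputable def caP (n : ℕ) : MvPolynomial (Fin 2) ℤ :=
  ∑ i ∈ Finset.range n, (narayana n (i + 1) : MvPolynomial (Fin 2) ℤ) * X 0 ^ i * X 1 ^ (n - 1 - i)

/-- The generating series F(t) = Σ_{n≥1} ca_n(a,b)·t^n ∈ ℤ[a,b][[t]]. -/
noncomputable def Fcat : PowerSeries (MvPolynomial (Fin 2) ℤ) := PowerSeries.mk fun n => caP n

/-! The root F = (1 - (a+b)t - √Δ)/(2abt), with Δ = (1 - (a+b)t)² - 4abt², of the quadratic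
satisfies the linear differential equation tΔF' + (1 - (a+b)t)F = 2t. Coefficientwise this is the
three-term recurrence (m+3) ca_{m+2} + m (a-b)² ca_m = (2m+3)(a+b) ca_{m+1}, which in turn follows
from the two hypergeometric recurrences of the Narayana numbers (in n, and along the diagonal).
Conversely, whenever F solves that differential equation, the residual
Q = abtF² - (1 - (a+b)t)F + t solves tΔQ' + (1 - (a-b)²t²)Q = 0, and this forces Q = 0 one
coefficient at a time, since the coefficient of t^n on the left is (n+1)·Q_n plus lower terms. -/

local notation "ℤ[a,b]" => MvPolynomial (Fin 2) ℤ

@[simp] lemma narayana_zero_right (n : ℕ) : narayana n 0 = 0 := by simp [narayana]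

@[simp] lemma narayana_one_right (n : ℕ) : narayana n 1 = 1 := by simp [narayana]

lemma narayana_succ_succ_eq_zero {n k : ℕ} (h : n < k) : narayana (n + 1) (k + 1) = 0 := by
  simp [narayana, Nat.choose_eq_zero_of_lt h]

lemma succ_dvd_choose_mul_choose (n k : ℕ) : k + 1 ∣ n.choose k * (n + 1).choose k := by
  have h₁ : k + 1 ∣ (n + 1) * (n.choose k * (n + 1).choose k) :=
    ⟨(n + 1).choose (k + 1) * (n + 1).choose k, by
      rw [← mul_assoc, Nat.add_one_mul_choose_eq]; ring⟩
  have h₂ : k + 1 ∣ (n + 2) * (n.choose k * (n + 1).choose k) :=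
    ⟨n.choose k * (n + 2).choose (k + 1), by
      rw [mul_left_comm, Nat.add_one_mul_choose_eq]; ring⟩
  rw [show n + 2 = (n + 1) + 1 by ring, add_one_mul] at h₂
  exact (Nat.dvd_add_right h₁).mp h₂

lemma succ_mul_narayana (n k : ℕ) :
    (k + 1) * narayana (n + 1) (k + 1) = n.choose k * (n + 1).choose k :=
  Nat.mul_div_cancel' (succ_dvd_choose_mul_choose n k)

lemma narayana_succ_succ_rec (n k : ℕ) :
    k * (k + 1) * narayana (n + 2) (k + 1) = (n + 1) * (n + 2) * narayana (n + 1) k := by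
  rcases k with _ | k
  · simp
  apply Nat.eq_of_mul_eq_mul_left k.succ_pos
  zify
  have h₁ : ((k : ℤ) + 1) * narayana (n + 1) (k + 1) = n.choose k * (n + 1).choose k := by
    exact_mod_cast succ_mul_narayana n k
  have h₂ : ((k : ℤ) + 2) * narayana (n + 2) (k + 2)
      = (n + 1).choose (k + 1) * (n + 2).choose (k + 1) := by
    exact_mod_cast succ_mul_narayana (n + 1) (k + 1)
  have h₃ : ((n : ℤ) + 1) * n.choose k = (n + 1).choose (k + 1) * (k + 1) := by
    exact_mod_cast Nat.add_one_mul_choose_eq n k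
  have h₄ : ((n : ℤ) + 2) * (n + 1).choose k = (n + 2).choose (k + 1) * (k + 1) := by
    exact_mod_cast Nat.add_one_mul_choose_eq (n + 1) k
  linear_combination ((k : ℤ) + 1) ^ 2 * h₂ - ((n : ℤ) + 1) * (n + 2) * h₁
    - ((k : ℤ) + 1) * (n + 2).choose (k + 1) * h₃ - ((n : ℤ) + 1) * n.choose k * h₄

lemma sub_mul_choose_succ (n k : ℕ) :
    ((n : ℤ) + 1 - k) * (n + 1).choose k = (n + 1) * n.choose k := by
  rcases le_or_gt k (n + 1) with h | h
  · have := Nat.choose_mul_succ_eq n k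
    zify [h] at this; linear_combination -this
  · simp [Nat.choose_eq_zero_of_lt h, Nat.choose_eq_zero_of_lt (n.lt_succ_self.trans h)]

lemma narayana_succ_left_rec (n k : ℕ) :
    ((n : ℤ) + 2 - k) * ((n : ℤ) + 3 - k) * narayana (n + 2) k
      = ((n : ℤ) + 1) * (n + 2) * narayana (n + 1) k := by
  rcases k with _ | k
  · simp
  apply mul_left_cancel₀ (show ((k : ℤ) + 1) ≠ 0 by positivity)
  have h₁ : ((k : ℤ) + 1) * narayana (n + 1) (k + 1) = n.choose k * (n + 1).choose k := by
    exact_mod_cast succ_mul_narayana n k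
  have h₂ : ((k : ℤ) + 1) * narayana (n + 2) (k + 1) = (n + 1).choose k * (n + 2).choose k := by
    exact_mod_cast succ_mul_narayana (n + 1) k
  have h₃ := sub_mul_choose_succ n k
  have h₄ := sub_mul_choose_succ (n + 1) k
  push_cast at h₄ ⊢
  linear_combination (((n : ℤ) + 2 - k) * (n + 2).choose k) * h₃
    + ((n : ℤ) + 1) * n.choose k * h₄
    + ((n : ℤ) + 1 - k) * ((n : ℤ) + 2 - k) * h₂ - ((n : ℤ) + 1) * (n + 2) * h₁

lemma narayana_three_term (w j : ℕ) :
    ((w : ℤ) + 4) * narayana (w + 3) (j + 1)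
      + ((w : ℤ) + 1)
        * (narayana (w + 1) (j - 1) - 2 * narayana (w + 1) j + narayana (w + 1) (j + 1))
      = (2 * (w : ℤ) + 5) * (narayana (w + 2) j + narayana (w + 2) (j + 1)) := by
  rcases j with _ | i
  · simp only [zero_add, narayana_one_right, Nat.cast_one, mul_one, zero_tsub, narayana_zero_right,
      CharP.cast_eq_zero, mul_zero, sub_self]
    ring
  have r₁ : ((i : ℤ) + 1) * (i + 2) * narayana (w + 3) (i + 2)
      = ((w : ℤ) + 2) * (w + 3) * narayana (w + 2) (i + 1) := by
    exact_mod_cast narayana_succ_succ_rec (w + 1) (i + 1)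
  have r₂ := narayana_succ_left_rec (w + 1) (i + 2)
  have r₃ : (i : ℤ) * (i + 1) * narayana (w + 2) (i + 1)
      = ((w : ℤ) + 1) * (w + 2) * narayana (w + 1) i := by
    exact_mod_cast narayana_succ_succ_rec w i
  have r₄ := narayana_succ_left_rec w (i + 1)
  have r₅ := narayana_succ_left_rec w (i + 2)
  push_cast at r₂ r₄ r₅ ⊢
  -- r₁, …, r₅ express all six terms through the top one; clear their denominators.
  apply mul_left_cancel₀ (show ((w : ℤ) + 1) * (w + 2) ^ 2 * (w + 3) ≠ 0 by positivity)
  linear_combination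
    ((2 * (w : ℤ) + 5) * (w + 1) * (w + 2)
      - ((w : ℤ) + 1) * (i * (i + 1) - 2 * ((w : ℤ) + 1 - i) * (w + 2 - i))) * r₁
    + ((2 * (w : ℤ) + 5) * (w + 1) * (w + 2) - ((w : ℤ) + 1) * (w - i) * (w + 1 - i)) * r₂
    - ((w : ℤ) + 1) * (w + 2) * (w + 3) * r₃
    + 2 * ((w : ℤ) + 1) * (w + 2) * (w + 3) * r₄
    - ((w : ℤ) + 1) * (w + 2) * (w + 3) * r₅

section BinaryForm

variable {S : Type*} [CommSemiring S] (x y : S)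

def binForm (n : ℕ) (g : ℕ → S) : S :=
  ∑ i ∈ Finset.range (n + 1), g i * x ^ i * y ^ (n - i)

variable {x y}

lemma x_mul_binForm {n : ℕ} {g g' : ℕ → S} (h₀ : g' 0 = 0) (hg : ∀ i, g' (i + 1) = g i) :
    x * binForm x y n g = binForm x y (n + 1) g' := by
  rw [binForm, binForm, Finset.sum_range_succ' _ (n + 1), h₀, Finset.mul_sum]
  simp only [hg, Nat.add_sub_add_right, zero_mul, add_zero]
  exact Finset.sum_congr rfl fun i _ => by ring

lemma y_mul_binForm {n : ℕ} {g : ℕ → S} (h : g (n + 1) = 0) :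
    y * binForm x y n g = binForm x y (n + 1) g := by
  rw [binForm, binForm, Finset.sum_range_succ _ (n + 1), h, Finset.mul_sum]
  simp only [zero_mul, add_zero]
  refine Finset.sum_congr rfl fun i hi => ?_
  rw [Nat.sub_add_comm (Nat.lt_succ_iff.mp (Finset.mem_range.mp hi))]
  ring

end BinaryForm

lemma caP_succ (n : ℕ) :
    caP (n + 1) = binForm (X 0) (X 1) n fun i => (narayana (n + 1) (i + 1) : ℤ[a,b]) :=
  rfl

lemma caP_three_term (m : ℕ) :
    ((m : ℤ[a,b]) + 3) * caP (m + 2) + (m : ℤ[a,b]) * (X 0 - X 1) ^ 2 * caP m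
      = (2 * (m : ℤ[a,b]) + 3) * (X 0 + X 1) * caP (m + 1) := by
  rcases m with _ | w
  · simp [caP, Finset.sum_range_succ, narayana, add_comm]
  set T : ℕ → ℕ → ℤ[a,b] := fun n k => narayana n k
  have hA₂ : X 0 * caP (w + 2) = binForm (X 0) (X 1) (w + 2) (T (w + 2)) :=
    x_mul_binForm (by simp [T]) fun i => rfl
  have hB₂ : X 1 * caP (w + 2) = binForm (X 0) (X 1) (w + 2) fun i => T (w + 2) (i + 1) :=
    y_mul_binForm (by simp [narayana_succ_succ_eq_zero])
  have hA₁ : X 0 * caP (w + 1) = binForm (X 0) (X 1) (w + 1) (T (w + 1)) :=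
    x_mul_binForm (by simp [T]) fun i => rfl
  have hB₁ : X 1 * caP (w + 1) = binForm (X 0) (X 1) (w + 1) fun i => T (w + 1) (i + 1) :=
    y_mul_binForm (by simp [narayana_succ_succ_eq_zero])
  have hAA : X 0 * (X 0 * caP (w + 1))
      = binForm (X 0) (X 1) (w + 2) fun i => T (w + 1) (i - 1) := by
    rw [hA₁]; exact x_mul_binForm (by simp [T]) fun i => rfl
  have hBA : X 1 * (X 0 * caP (w + 1)) = binForm (X 0) (X 1) (w + 2) (T (w + 1)) := by
    rw [hA₁]; exact y_mul_binForm (by simp [T, narayana_succ_succ_eq_zero])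
  have hBB : X 1 * (X 1 * caP (w + 1))
      = binForm (X 0) (X 1) (w + 2) fun i => T (w + 1) (i + 1) := by
    rw [hB₁]; exact y_mul_binForm (by simp [T, narayana_succ_succ_eq_zero])
  have hsum : ((w : ℤ[a,b]) + 4) * caP (w + 3)
      + (w + 1) * (binForm (X 0) (X 1) (w + 2) (fun i => T (w + 1) (i - 1))
        - 2 * binForm (X 0) (X 1) (w + 2) (T (w + 1))
        + binForm (X 0) (X 1) (w + 2) fun i => T (w + 1) (i + 1))
      = (2 * w + 5) * (binForm (X 0) (X 1) (w + 2) (T (w + 2))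
        + binForm (X 0) (X 1) (w + 2) fun i => T (w + 2) (i + 1)) := by
    simp only [caP_succ, binForm, Finset.mul_sum, ← Finset.sum_add_distrib,
      ← Finset.sum_sub_distrib]
    refine Finset.sum_congr rfl fun j _ => ?_
    have h := congrArg (Int.cast : ℤ → ℤ[a,b]) (narayana_three_term w j)
    push_cast at h
    linear_combination (X 0 ^ j * X 1 ^ (w + 2 - j) : ℤ[a,b]) * h
  push_cast
  linear_combination hsum + ((w : ℤ[a,b]) + 1) * (hAA - 2 * hBA + hBB)
    - (2 * (w : ℤ[a,b]) + 5) * (hA₂ + hB₂)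

namespace PowerSeries

variable {R : Type*}

theorem coeff_X_mul_derivative [CommSemiring R] (f : R⟦X⟧) (n : ℕ) :
    coeff n (X * d⁄dX R f) = n * coeff n f := by
  rcases n with _ | n
  · simp
  · rw [coeff_succ_X_mul, coeff_derivative]; push_cast; ring

theorem eq_zero_of_mul_X_mul_derivative_add_mul_eq_zero [CommRing R] [IsAddTorsionFree R]
    {f A B : R⟦X⟧} (hA : constantCoeff A = 1) (hB : constantCoeff B = 1)
    (h : A * (X * d⁄dX R f) + B * f = 0) : f = 0 := by
  ext n
  induction n using Nat.strong_induction_on with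
  | _ n ih =>
  have hlow : ∀ p : ℕ × ℕ, p.1 + p.2 = n → p ≠ (0, n) → coeff p.2 f = 0 := by
    rintro ⟨p, q⟩ hpq hne
    exact ih q (by grind)
  have hn := congrArg (coeff n) h
  rw [map_add, coeff_mul, coeff_mul, map_zero,
    Finset.sum_eq_single (0, n) (fun p hp hne => by
      simp [coeff_X_mul_derivative, hlow p (by simpa using hp) hne])
      (by simp),
    Finset.sum_eq_single (0, n) (fun p hp hne => by simp [hlow p (by simpa using hp) hne])
      (by simp)] at hn
  simp only [coeff_zero_eq_constantCoeff, hA, coeff_X_mul_derivative, one_mul, hB] at hn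
  rw [map_zero]
  refine IsAddTorsionFree.nsmul_right_injective n.succ_ne_zero ?_
  simp only [smul_zero, nsmul_eq_mul]
  push_cast
  linear_combination hn

section Quadratic

variable [CommRing R] (a b : R)

noncomputable def quadResidual (F : R⟦X⟧) : R⟦X⟧ :=
  C (a * b) * X * F ^ 2 - (1 - C (a + b) * X) * F + X

noncomputable def discr : R⟦X⟧ := 1 - C (2 * (a + b)) * X + C ((a - b) ^ 2) * X ^ 2

variable {a b}

theorem discr_mul_X_mul_derivative_quadResidual {F : R⟦X⟧}
    (hF : discr a b * (X * d⁄dX R F) + (1 - C (a + b) * X) * F = 2 * X) :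
    discr a b * (X * d⁄dX R (quadResidual a b F))
      + (1 - C ((a - b) ^ 2) * X ^ 2) * quadResidual a b F = 0 := by
  have hQ' : d⁄dX R (quadResidual a b F)
      = C (a * b) * F ^ 2 + C (a + b) * F + 1
        - (1 - C (a + b) * X - 2 * C (a * b) * X * F) * d⁄dX R F := by
    simp only [quadResidual, map_add, map_sub, Derivation.leibniz, derivative_pow, derivative_C,
      derivative_X, derivative_one, smul_eq_mul]
    ring
  rw [hQ']
  -- The multiplier is ∂Q/∂F.
  simp only [discr, quadResidual, map_mul, map_add, map_sub, map_pow, map_ofNat] at hF ⊢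
  linear_combination (2 * C a * C b * X * F - (1 - (C a + C b) * X)) * hF

theorem quadResidual_eq_zero {F : R⟦X⟧} [IsAddTorsionFree R]
    (hF : discr a b * (X * d⁄dX R F) + (1 - C (a + b) * X) * F = 2 * X) :
    quadResidual a b F = 0 :=
  eq_zero_of_mul_X_mul_derivative_add_mul_eq_zero (by simp [discr]) (by simp)
    (discr_mul_X_mul_derivative_quadResidual hF)

end Quadratic

end PowerSeries

lemma coeff_Fcat (n : ℕ) : PowerSeries.coeff n Fcat = caP n := PowerSeries.coeff_mk _ _

open scoped PowerSeries in
theorem Fcat_ode :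
    PowerSeries.discr (X 0) (X 1) * (PowerSeries.X * d⁄dX _ Fcat)
      + (1 - PowerSeries.C (X 0 + X 1) * PowerSeries.X) * Fcat = 2 * PowerSeries.X := by
  set θF := PowerSeries.X * d⁄dX _ Fcat with hθF
  have hθ (n : ℕ) : PowerSeries.coeff n θF = n * caP n := by
    rw [hθF, PowerSeries.coeff_X_mul_derivative, coeff_Fcat]
  rw [show PowerSeries.discr (X 0) (X 1) * θF
        + (1 - PowerSeries.C (X 0 + X 1) * PowerSeries.X) * Fcat
      = θF + Fcat + PowerSeries.X * (PowerSeries.X * (PowerSeries.C ((X 0 - X 1) ^ 2) * θF)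
        - PowerSeries.C (X 0 + X 1) * (θF + θF + Fcat)) by
    rw [PowerSeries.discr, map_mul, map_ofNat]; ring,
    show (2 : PowerSeries ℤ[a,b]) * PowerSeries.X = PowerSeries.X * PowerSeries.C 2 by
      rw [map_ofNat]; ring]
  refine PowerSeries.ext fun n => ?_
  rcases n with _ | _ | n
  all_goals simp only [map_add, map_sub, add_mul, PowerSeries.coeff_zero_X_mul,
    PowerSeries.coeff_succ_X_mul, PowerSeries.coeff_C_mul, PowerSeries.coeff_C, hθ, coeff_Fcat]
  · simp [caP]
  · norm_num [caP]
  · simp only [Nat.succ_ne_zero, if_false]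
    push_cast
    linear_combination caP_three_term n

theorem stmt2 :
    Fcat = PowerSeries.X
        + PowerSeries.C (X 0 + X 1) * PowerSeries.X * Fcat
        + PowerSeries.C (X 0 * X 1) * PowerSeries.X * Fcat ^ 2 ∧
    PowerSeries.C (X 0 * X 1) * PowerSeries.X * Fcat ^ 2
        - (1 - PowerSeries.C (X 0 + X 1) * PowerSeries.X) * Fcat
        + PowerSeries.X = 0 := by
  have h : PowerSeries.quadResidual (X 0) (X 1) Fcat = 0 :=
    PowerSeries.quadResidual_eq_zero Fcat_ode
  rw [PowerSeries.quadResidual] at h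
  exact ⟨by linear_combination -h, h⟩
end

section
/- For every n ≥ 1 and every σ ∈ S_n, c_{σ̄} = (−1)^{n−1}·c_σ, where σ̄ = (σ(n), σ(n−1), …, σ(1)) is the reversal of the word σ. -/
open MvPolynomial

/-- The standardization of a word with distinct letters: each letter is replaced by its rank. -/
def stdW (w : List ℕ) : List ℕ := w.map fun x => (w.filter (· ≤ x)).length

/-- a_k = a for k ≥ 2, a_1 = 1. -/
noncomputable def aW (k : ℕ) : MvPolynomial (Fin 2) ℤ := if 2 ≤ k then X 0 else 1

/-- b_k = b for k ≥ 2, b_1 = 1. -/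
noncomputable def bW (k : ℕ) : MvPolynomial (Fin 2) ℤ := if 2 ≤ k then X 1 else 1

/-- Fuel-based auxiliary for the recursive definition of c_σ on words. -/
noncomputable def cAux : ℕ → List ℕ → MvPolynomial (Fin 2) ℤ
  | 0, _ => 1
  | f + 1, w =>
    if w.length ≤ 1 then 1
    else
      (∑ k ∈ Finset.Ioo 0 w.length,
        if 1 ∈ w.take k ∧ w.length ∈ w.drop k then
          bW k * aW (w.length - k) * cAux f (stdW (w.take k)) * cAux f (stdW (w.drop k))
        else 0)
      -
      (∑ k ∈ Finset.Ioo 0 w.length,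
        if w.length ∈ w.take k ∧ 1 ∈ w.drop k then
          aW k * bW (w.length - k) * cAux f (stdW (w.take k)) * cAux f (stdW (w.drop k))
        else 0)

/-- The polynomial c_σ ∈ ℤ[a,b] of a permutation word σ (a word on {1,…,n}). -/
noncomputable def cpol (w : List ℕ) : MvPolynomial (Fin 2) ℤ := cAux w.length w

/-- The word σ(1)σ(2)⋯σ(n) ∈ {1,…,n}ⁿ of a permutation σ ∈ S_n. -/
def permWord {n : ℕ} (σ : Equiv.Perm (Fin n)) : List ℕ := List.ofFn fun i => (σ i : ℕ) + 1

/-!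
Reversing `w` reverses every factorization `w = u·v` into `w̄ = v̄·ū`, and exchanges the two
sums of the recursion: a split at `k` with `1` on the left and `n` on the right becomes a split
at `n - k` with `n` on the left and `1` on the right, and the weights `b_{|u|} a_{|v|}` become
`a_{|v̄|} b_{|ū|}`. Since standardization commutes with reversal, induction on the length gives
signs `(-1)^{|u|+1} (-1)^{|v|+1} = (-1)^n` on each term, and the minus sign between the two sums
contributes one more factor `-1`.
-/

@[simp]
lemma stdW_length (w : List ℕ) : (stdW w).length = w.length := by simp [stdW]

lemma stdW_reverse (w : List ℕ) : stdW w.reverse = (stdW w).reverse := by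
  simp [stdW, List.filter_reverse, List.map_reverse]

lemma cAux_succ_of_length_le (f : ℕ) (w : List ℕ) (hw : w.length ≤ f) :
    cAux (f + 1) w = cAux f w := by
  induction f generalizing w with
  | zero => simp [cAux, show w.length ≤ 1 by omega]
  | succ f ih =>
    rw [cAux.eq_2 w (f + 1), cAux.eq_2 w f]
    split_ifs
    · rfl
    congr 1 <;> refine Finset.sum_congr rfl fun k hk => ?_ <;> rw [Finset.mem_Ioo] at hk <;>
      rw [ih, ih] <;> simp only [stdW_length, List.length_take, List.length_drop] <;> omega

lemma cAux_eq_cpol {f : ℕ} {w : List ℕ} (hw : w.length ≤ f) : cAux f w = cpol w := by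
  induction f, hw using Nat.le_induction with
  | base => rfl
  | succ f hf ih => rw [cAux_succ_of_length_le f w hf, ih]

noncomputable def splitTerm (x y : ℕ) (α β : ℕ → MvPolynomial (Fin 2) ℤ) (w : List ℕ) (k : ℕ) :
    MvPolynomial (Fin 2) ℤ :=
  if x ∈ w.take k ∧ y ∈ w.drop k then
    α k * β (w.length - k) * cpol (stdW (w.take k)) * cpol (stdW (w.drop k))
  else 0

lemma cpol_eq_sum_sub_sum {w : List ℕ} (hw : 2 ≤ w.length) :
    cpol w = ∑ k ∈ Finset.Ioo 0 w.length, splitTerm 1 w.length bW aW w k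
      - ∑ k ∈ Finset.Ioo 0 w.length, splitTerm w.length 1 aW bW w k := by
  obtain ⟨m, hm⟩ : ∃ m, w.length = m + 1 := ⟨w.length - 1, by omega⟩
  conv_lhs => rw [cpol, hm]
  rw [cAux.eq_2 w m, if_neg (by omega)]
  congr 1 <;> refine Finset.sum_congr rfl fun k hk => ?_ <;> rw [Finset.mem_Ioo] at hk <;>
    simp only [splitTerm] <;>
    rw [cAux_eq_cpol (by simp; omega), cAux_eq_cpol (by simp; omega)]

lemma splitTerm_reverse (x y : ℕ) (α β : ℕ → MvPolynomial (Fin 2) ℤ) {w : List ℕ} {k : ℕ}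
    (hk : k ∈ Finset.Ioo 0 w.length)
    (hrev : ∀ u : List ℕ, u ≠ [] → u.length < w.length →
      cpol u.reverse = (-1) ^ (u.length + 1) * cpol u) :
    splitTerm x y α β w.reverse k = (-1) ^ w.length * splitTerm y x β α w (w.length - k) := by
  rw [Finset.mem_Ioo] at hk
  have hrevStd : ∀ u : List ℕ, u ≠ [] → u.length < w.length →
      cpol (stdW u).reverse = (-1) ^ (u.length + 1) * cpol (stdW u) := fun u hu hlen => by
    simpa using hrev (stdW u) (by simpa [← List.length_pos_iff] using hu) (by simpa using hlen)
  have hsign : ((-1 : MvPolynomial (Fin 2) ℤ)) ^ (k + 1) * (-1) ^ (w.length - k + 1)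
      = (-1) ^ w.length := by
    rw [← pow_add, show k + 1 + (w.length - k + 1) = w.length + 2 by omega, pow_add]
    ring
  simp only [splitTerm, List.length_reverse, List.take_reverse, List.drop_reverse,
    List.mem_reverse, stdW_reverse]
  rw [hrevStd _ (List.ne_nil_of_length_pos (by simp; omega)) (by simp; omega),
    hrevStd _ (List.ne_nil_of_length_pos (by simp; omega)) (by simp; omega)]
  simp only [List.length_drop, List.length_take, show w.length - (w.length - k) = k by omega,
    show min (w.length - k) w.length = w.length - k by omega, and_comm]
  split_ifs
  · linear_combination (α k * β (w.length - k) * cpol (stdW (w.take (w.length - k)))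
      * cpol (stdW (w.drop (w.length - k)))) * hsign
  · simp

lemma sum_Ioo_zero_reflect {M : Type*} [AddCommMonoid M] (f : ℕ → M) (n : ℕ) :
    ∑ k ∈ Finset.Ioo 0 n, f (n - k) = ∑ k ∈ Finset.Ioo 0 n, f k :=
  Finset.sum_nbij' (n - ·) (n - ·) (by simp +contextual; omega) (by simp +contextual; omega)
    (by simp +contextual; omega) (by simp +contextual; omega) (by simp)

theorem cpol_reverse {w : List ℕ} (hw : w ≠ []) :
    cpol w.reverse = (-1) ^ (w.length + 1) * cpol w := by
  induction hn : w.length using Nat.strong_induction_on generalizing w with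
  | _ n ih =>
  have hrev : ∀ u : List ℕ, u ≠ [] → u.length < w.length →
      cpol u.reverse = (-1) ^ (u.length + 1) * cpol u :=
    fun u hu hlen => ih u.length (hn ▸ hlen) hu rfl
  subst hn
  obtain ⟨a, rfl⟩ | hw2 : (∃ a, w = [a]) ∨ 2 ≤ w.length := by
    rcases w with _ | ⟨a, _ | ⟨b, w⟩⟩
    exacts [absurd rfl hw, .inl ⟨a, rfl⟩, .inr (by simp)]
  · simp [cpol, cAux]
  rw [cpol_eq_sum_sub_sum (by simpa using hw2), cpol_eq_sum_sub_sum hw2, List.length_reverse,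
    Finset.sum_congr rfl fun k hk => splitTerm_reverse _ _ _ _ hk hrev,
    Finset.sum_congr rfl fun k hk => splitTerm_reverse _ _ _ _ hk hrev,
    ← Finset.mul_sum, ← Finset.mul_sum,
    sum_Ioo_zero_reflect (splitTerm w.length 1 aW bW w),
    sum_Ioo_zero_reflect (splitTerm 1 w.length bW aW w)]
  ring

theorem stmt3 : ∀ n : ℕ, 1 ≤ n → ∀ σ : Equiv.Perm (Fin n),
    cpol (permWord σ).reverse = (-1) ^ (n - 1) * cpol (permWord σ) := by
  intro n hn σ
  have hlen : (permWord σ).length = n := by simp [permWord]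
  rw [cpol_reverse (List.ne_nil_of_length_pos (by omega)), hlen,
    show n + 1 = n - 1 + 2 by omega, pow_add]
  ring
end
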